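/- arXiv:1101.2480 — 2 statements merged into one kernel-verified Lean document; each statement's English description precedes it below -/
import Mathlib

section
/- Suppose for each i ∈ ℕ we are given n_i ∈ ℕ, a compact subset P_i ⊂ I^{n_i}, δ_i > 0, ε_i > 0, and a map g_i^{i+1} : P_{i+1} → P_i such that: (i) if u, v ∈ Q and ρ(u,v) ≤ ε_{i+1}, then ρ(p_{n_i}(u), p_{n_i}(v)) < δ_i; (ii) n_i < n_{i+1}; (iii) 9/2^{n_i} < ε_i; (iv) ρ(g_i^{i+1}(x), p_{n_i}(x)) < δ_i for all x ∈ P_{i+1}; (v) δ_i < 1/2^{n_i − 1}; (vi) P_{i+1} × Q_{n_{i+1}} ⊂ P_i × Q_{n_i}. Put X = ∩_{i=1}^∞ P_i × Q_{n_i} and Z = lim (P_i, g_i^{i+1}). Then for each thread z = (a_1, a_2, …) ∈ Z ⊂ ∏_{i=1}^∞ P_i, with each a_i regarded as a point of Q: (a) (a_i) is a Cauchy sequence in Q whose limit lies in X, and (b) the function π : Z → X given by π(z) = lim_{i→∞} a_i is continuous. -/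
open Set Topology Filter

noncomputable section

/-! ### The Hilbert cube `Q = ∏_{i=1}^∞ I` realized inside `ℕ → ℝ` -/

/-- The ambient space `ℝ^∞` containing the Hilbert cube. -/
abbrev ESp : Type := ℕ → ℝ

/-- The metric `ρ(x, y) = ∑_{i=1}^∞ |x_i - y_i| / 2^i` on the Hilbert cube. -/
noncomputable def rho (x y : ESp) : ℝ := ∑' i : ℕ, |x i - y i| / 2 ^ (i + 1)

/-- The coordinate projection `p_n : Q → I^n` (followed by the identification of
`I^n` with the slice `I^n × {0} ⊆ Q`). -/
def proj (n : ℕ) (x : ESp) : ESp := fun j => if j < n then x j else 0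

/-- The Hilbert cube `Q`. -/
def HCube : Set ESp := {x | ∀ i, x i ∈ Set.Icc (0 : ℝ) 1}

/-- The slice `I^n × {0} ⊆ Q`, the canonical copy of `I^n` in `Q`. -/
def cubeSlice (n : ℕ) : Set ESp := {x ∈ HCube | ∀ j, n ≤ j → x j = 0}

/-- `P × Q_n ⊆ Q = I^n × Q_n`, for a subset `P` of the slice `I^n × {0}`. -/
def tube (P : Set ESp) (n : ℕ) : Set ESp := {x ∈ HCube | proj n x ∈ P}

/-- The data and hypotheses (i)–(vi) of the inverse-sequence setup of Lemma 3.1. -/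
structure InvSeqSetup where
  n : ℕ → ℕ
  P : ℕ → Set ESp
  δ : ℕ → ℝ
  ε : ℕ → ℝ
  /-- the bonding maps `g_i^{i+1} : P_{i+1} → P_i` -/
  g : ℕ → ESp → ESp
  P_sub : ∀ i, P i ⊆ cubeSlice (n i)
  P_cpt : ∀ i, IsCompact (P i)
  δ_pos : ∀ i, 0 < δ i
  ε_pos : ∀ i, 0 < ε i
  g_maps : ∀ i, Set.MapsTo (g i) (P (i + 1)) (P i)
  g_cont : ∀ i, ContinuousOn (g i) (P (i + 1))
  /-- (i) -/
  hyp1 : ∀ i, ∀ u ∈ HCube, ∀ v ∈ HCube,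
    rho u v ≤ ε (i + 1) → rho (proj (n i) u) (proj (n i) v) < δ i
  /-- (ii) -/
  hyp2 : ∀ i, n i < n (i + 1)
  /-- (iii) -/
  hyp3 : ∀ i, 9 / 2 ^ n i < ε i
  /-- (iv) -/
  hyp4 : ∀ i, ∀ x ∈ P (i + 1), rho (g i x) (proj (n i) x) < δ i
  /-- (v) -/
  hyp5 : ∀ i, δ i < 1 / 2 ^ (n i - 1)
  /-- (vi) -/
  hyp6 : ∀ i, tube (P (i + 1)) (n (i + 1)) ⊆ tube (P i) (n i)

namespace InvSeqSetup

/-- `X = ∩_{i=1}^∞ P_i × Q_{n_i}`. -/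
def X (S : InvSeqSetup) : Set ESp := ⋂ i, tube (S.P i) (S.n i)

/-- `Z = lim (P_i, g_i^{i+1})`: the space of threads of the inverse sequence. -/
abbrev Thread (S : InvSeqSetup) : Type :=
  {a : ℕ → ESp // (∀ i, a i ∈ S.P i) ∧ ∀ i, S.g i (a (i + 1)) = a i}

/-- `π : Z → X` is the limit map, `π(z) = lim_{i→∞} a_i` for a thread `z = (a_i)`. -/
def IsLimitMap (S : InvSeqSetup) (π : S.Thread → ESp) : Prop :=
  ∀ z : S.Thread, Filter.Tendsto (fun i => rho (z.1 i) (π z)) Filter.atTop (nhds 0)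

/-- `B_{x,i} = N̄(p_{n_i}(x), 2δ_i) ∩ P_i`. -/
def B (S : InvSeqSetup) (x : ESp) (i : ℕ) : Set ESp :=
  {y ∈ cubeSlice (S.n i) | rho y (proj (S.n i) x) ≤ 2 * S.δ i} ∩ S.P i

/-- `B^#_{x,i} = N̄(p_{n_i}(x), ε_i) ∩ P_i`. -/
def Bs (S : InvSeqSetup) (x : ESp) (i : ℕ) : Set ESp :=
  {y ∈ cubeSlice (S.n i) | rho y (proj (S.n i) x) ≤ S.ε i} ∩ S.P i

end InvSeqSetup

end

/-!
Consecutive terms of a thread are close: `a_i = g_i(a_{i+1})` lies within `δ_i` of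
`p_{n_i}(a_{i+1})` by (iv), which lies within `2^{-n_i}` of `a_{i+1}`, and (v) makes the sum
at most `3 · 2^{-i}`. Summing gives `ρ(a_m, a_l) ≤ 6 · 2^{-min(m,l)}` for every thread, so each
coordinate converges uniformly on `Z`, and the limit map is continuous for the product topology.
The limit lies in `X` because the tubes `P_i × Q_{n_i}` are closed and decreasing by (vi), and
`ρ`-convergence follows from coordinatewise convergence by dominated convergence for series.
-/

section HilbertCube

lemma abs_sub_le_one_of_mem_HCube {x y : ESp} (hx : x ∈ HCube) (hy : y ∈ HCube) (j : ℕ) :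
    |x j - y j| ≤ 1 :=
  abs_sub_le_iff.2 ⟨by linarith [(hx j).2, (hy j).1], by linarith [(hx j).1, (hy j).2]⟩

lemma rho_summand_le {x y : ESp} (hx : x ∈ HCube) (hy : y ∈ HCube) (j : ℕ) :
    |x j - y j| / 2 ^ (j + 1) ≤ (1 / 2 : ℝ) ^ j := by
  rw [one_div_pow, pow_succ]
  gcongr
  · exact abs_sub_le_one_of_mem_HCube hx hy j
  · exact le_mul_of_one_le_right (by positivity) one_le_two

lemma summable_rho_summand {x y : ESp} (hx : x ∈ HCube) (hy : y ∈ HCube) :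
    Summable fun j => |x j - y j| / 2 ^ (j + 1) :=
  summable_geometric_two.of_nonneg_of_le (fun _ => by positivity) (rho_summand_le hx hy)

@[simp]
lemma rho_self (x : ESp) : rho x x = 0 := by simp [rho]

lemma rho_comm (x y : ESp) : rho x y = rho y x :=
  tsum_congr fun _ => by rw [abs_sub_comm]

lemma rho_triangle {x y z : ESp} (hx : x ∈ HCube) (hy : y ∈ HCube) (hz : z ∈ HCube) :
    rho x z ≤ rho x y + rho y z := by
  have hxy := summable_rho_summand hx hy
  have hyz := summable_rho_summand hy hz
  rw [rho, rho, rho, ← hxy.tsum_add hyz]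
  refine (summable_rho_summand hx hz).tsum_le_tsum (fun j => ?_) (hxy.add hyz)
  rw [← add_div]
  gcongr
  exact abs_sub_le _ _ _

lemma abs_sub_le_two_pow_mul_rho {x y : ESp} (hx : x ∈ HCube) (hy : y ∈ HCube) (j : ℕ) :
    |x j - y j| ≤ 2 ^ (j + 1) * rho x y := by
  rw [← div_le_iff₀' (by positivity)]
  exact (summable_rho_summand hx hy).le_tsum j fun _ _ => by positivity

lemma proj_mem_HCube {x : ESp} (hx : x ∈ HCube) (n : ℕ) : proj n x ∈ HCube := by
  intro j
  simp only [proj]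
  split_ifs
  exacts [hx j, ⟨le_rfl, zero_le_one⟩]

lemma proj_eq_self_of_mem_cubeSlice {n : ℕ} {x : ESp} (hx : x ∈ cubeSlice n) :
    proj n x = x := by
  funext j
  simp only [proj]
  split_ifs with h
  · rfl
  · exact (hx.2 j (not_lt.1 h)).symm

lemma rho_proj_le {x : ESp} (hx : x ∈ HCube) (n : ℕ) :
    rho x (proj n x) ≤ (2⁻¹ : ℝ) ^ n := by
  have hsum : Summable fun j : ℕ => (if n ≤ j then (2⁻¹ : ℝ) ^ j else 0) / 2 :=
    (summable_geometric_two.indicator {j | n ≤ j}).div_const 2 |>.congr fun j => by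
      simp [Set.indicator]
  calc rho x (proj n x) ≤ ∑' j : ℕ, (if n ≤ j then (2⁻¹ : ℝ) ^ j else 0) / 2 := by
        refine (summable_rho_summand hx (proj_mem_HCube hx n)).tsum_le_tsum (fun j => ?_) hsum
        by_cases h : n ≤ j
        · simp only [proj, if_neg (not_lt.2 h), if_pos h, sub_zero, abs_of_nonneg (hx j).1,
            pow_succ, inv_pow, div_eq_mul_inv, mul_inv]
          exact mul_le_of_le_one_left (by positivity) (hx j).2
        · simp [proj, h, not_le.1 h]
    _ = (2⁻¹ : ℝ) ^ n := by
        rw [tsum_div_const, tsum_geometric_inv_two_ge]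
        ring

lemma continuous_proj (n : ℕ) : Continuous (proj n) :=
  continuous_pi fun j => by
    simp only [proj]
    split_ifs
    exacts [continuous_apply j, continuous_const]

lemma isClosed_HCube : IsClosed HCube := by
  simp only [HCube, ofPred_forall]
  exact isClosed_iInter fun j => isClosed_Icc.preimage (continuous_apply j)

lemma isClosed_tube {P : Set ESp} (hP : IsClosed P) (n : ℕ) : IsClosed (tube P n) :=
  isClosed_HCube.inter (hP.preimage (continuous_proj n))

lemma tendsto_rho_of_tendsto {α : Type*} {l : Filter α} {x : α → ESp} {y : ESp}
    (hx : ∀ a, x a ∈ HCube) (hy : y ∈ HCube) (h : Tendsto x l (𝓝 y)) :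
    Tendsto (fun a => rho (x a) y) l (𝓝 0) := by
  have hterm : ∀ j, Tendsto (fun a => |x a j - y j| / 2 ^ (j + 1)) l (𝓝 0) := fun j => by
    simpa using (((tendsto_pi_nhds.1 h j).sub_const (y j)).abs).div_const (2 ^ (j + 1))
  simpa [rho] using tendsto_tsum_of_dominated_convergence summable_geometric_two hterm
    (Eventually.of_forall fun a j => by
      rw [Real.norm_of_nonneg (by positivity)]
      exact rho_summand_le (hx a) hy j)

lemma rho_le_of_rho_succ_le {x : ℕ → ESp} (hx : ∀ i, x i ∈ HCube) {C : ℝ}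
    (hstep : ∀ i, rho (x i) (x (i + 1)) ≤ C * 2⁻¹ ^ i) {m l : ℕ} (hml : m ≤ l) :
    rho (x m) (x l) ≤ 2 * C * 2⁻¹ ^ m - 2 * C * 2⁻¹ ^ l := by
  induction l, hml using Nat.le_induction with
  | base => simp
  | succ l _ ih =>
    have := rho_triangle (hx m) (hx l) (hx (l + 1))
    linarith [hstep l, show 2 * C * (2⁻¹ : ℝ) ^ (l + 1) = C * 2⁻¹ ^ l by ring]

end HilbertCube

namespace InvSeqSetup

variable (S : InvSeqSetup)

lemma self_le_n (i : ℕ) : i ≤ S.n i :=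
  (strictMono_nat_of_lt_succ S.hyp2).le_apply

lemma antitone_tube : Antitone fun i => tube (S.P i) (S.n i) :=
  antitone_nat_of_succ_le S.hyp6

lemma δ_lt (i : ℕ) : S.δ i < 2 * 2⁻¹ ^ S.n i := by
  have hpow : (2 : ℝ) ^ S.n i ≤ 2 * 2 ^ (S.n i - 1) := by
    rw [← pow_succ']
    exact pow_le_pow_right₀ one_le_two (by omega)
  calc S.δ i < 1 / 2 ^ (S.n i - 1) := S.hyp5 i
    _ = 2 / (2 * 2 ^ (S.n i - 1)) := by field_simp
    _ ≤ 2 / 2 ^ S.n i := by gcongr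
    _ = 2 * 2⁻¹ ^ S.n i := by rw [inv_pow, div_eq_mul_inv]

variable {S} (z : S.Thread)

lemma thread_mem_cubeSlice (i : ℕ) : z.1 i ∈ cubeSlice (S.n i) :=
  S.P_sub i (z.2.1 i)

lemma thread_mem_HCube (i : ℕ) : z.1 i ∈ HCube :=
  (thread_mem_cubeSlice z i).1

lemma thread_mem_tube (i : ℕ) : z.1 i ∈ tube (S.P i) (S.n i) :=
  ⟨thread_mem_HCube z i, by
    rw [proj_eq_self_of_mem_cubeSlice (thread_mem_cubeSlice z i)]
    exact z.2.1 i⟩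

lemma rho_thread_succ_le (i : ℕ) : rho (z.1 i) (z.1 (i + 1)) ≤ 3 * 2⁻¹ ^ i := by
  have hz := thread_mem_HCube z
  have hg : rho (z.1 i) (proj (S.n i) (z.1 (i + 1))) < S.δ i := by
    rw [← z.2.2 i]
    exact S.hyp4 i _ (z.2.1 (i + 1))
  have hproj : rho (proj (S.n i) (z.1 (i + 1))) (z.1 (i + 1)) ≤ 2⁻¹ ^ S.n i := by
    rw [rho_comm]
    exact rho_proj_le (hz (i + 1)) _
  have hn : (2⁻¹ : ℝ) ^ S.n i ≤ 2⁻¹ ^ i :=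
    pow_le_pow_of_le_one (by norm_num) (by norm_num) (S.self_le_n i)
  linarith [rho_triangle (hz i) (proj_mem_HCube (hz (i + 1)) (S.n i)) (hz (i + 1)), S.δ_lt i]

lemma rho_thread_le (m l : ℕ) : rho (z.1 m) (z.1 l) ≤ 6 * 2⁻¹ ^ min m l := by
  wlog h : m ≤ l generalizing m l
  · rw [rho_comm, min_comm]
    exact this l m (le_of_not_ge h)
  rw [min_eq_left h]
  linarith [rho_le_of_rho_succ_le (thread_mem_HCube z) (rho_thread_succ_le z) h,
    pow_nonneg (by norm_num : (0 : ℝ) ≤ 2⁻¹) l]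

variable (S) in
lemma uniformCauchySeqOn_thread_coord (j : ℕ) :
    UniformCauchySeqOn (fun m (z : S.Thread) => z.1 m j) atTop univ := by
  rw [Metric.uniformCauchySeqOn_iff]
  intro e he
  have hbound : Tendsto (fun N : ℕ => 2 ^ (j + 1) * (6 * (2⁻¹ : ℝ) ^ N)) atTop (𝓝 0) := by
    simpa using ((tendsto_pow_atTop_nhds_zero_of_lt_one (r := (2⁻¹ : ℝ)) (by norm_num)
      (by norm_num)).const_mul 6).const_mul (2 ^ (j + 1) : ℝ)
  obtain ⟨N, hN⟩ := (hbound.eventually (gt_mem_nhds he)).exists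
  refine ⟨N, fun m hm l hl z _ => ?_⟩
  calc dist (z.1 m j) (z.1 l j) ≤ 2 ^ (j + 1) * rho (z.1 m) (z.1 l) :=
        abs_sub_le_two_pow_mul_rho (thread_mem_HCube z m) (thread_mem_HCube z l) j
    _ ≤ 2 ^ (j + 1) * (6 * 2⁻¹ ^ N) := by
        gcongr
        exact (rho_thread_le z m l).trans (mul_le_mul_of_nonneg_left
          (pow_le_pow_of_le_one (by norm_num) (by norm_num) (le_min hm hl)) (by norm_num))
    _ < e := hN

noncomputable def threadLimit : ESp := fun j => limUnder atTop fun m => z.1 m j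

lemma tendsto_thread : Tendsto z.1 atTop (𝓝 (threadLimit z)) :=
  tendsto_pi_nhds.2 fun j =>
    ((uniformCauchySeqOn_thread_coord S j).cauchySeq (mem_univ z)).tendsto_limUnder

lemma threadLimit_mem_X : threadLimit z ∈ S.X :=
  mem_iInter.2 fun i => (isClosed_tube (S.P_cpt i).isClosed _).mem_of_tendsto (tendsto_thread z)
    ((eventually_ge_atTop i).mono fun _ hk => S.antitone_tube hk (thread_mem_tube z _))

lemma tendsto_rho_threadLimit : Tendsto (fun i => rho (z.1 i) (threadLimit z)) atTop (𝓝 0) :=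
  tendsto_rho_of_tendsto (thread_mem_HCube z) (mem_iInter.1 (threadLimit_mem_X z) 0).1
    (tendsto_thread z)

lemma exists_rho_thread_lt {e : ℝ} (he : 0 < e) :
    ∃ N : ℕ, ∀ m ≥ N, ∀ l ≥ N, rho (z.1 m) (z.1 l) < e := by
  obtain ⟨N, hN⟩ := eventually_atTop.1
    ((tendsto_rho_threadLimit z).eventually (gt_mem_nhds (half_pos he)))
  refine ⟨N, fun m hm l hl => ?_⟩
  have hL : threadLimit z ∈ HCube := (mem_iInter.1 (threadLimit_mem_X z) 0).1
  linarith [rho_triangle (thread_mem_HCube z m) hL (thread_mem_HCube z l), hN m hm, hN l hl,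
    rho_comm (threadLimit z) (z.1 l)]

variable (S) in
lemma continuous_threadLimit : Continuous (threadLimit : S.Thread → ESp) :=
  continuous_pi fun j =>
    (tendstoUniformlyOn_univ.1 <|
      (uniformCauchySeqOn_thread_coord S j).tendstoUniformlyOn_of_tendsto fun z _ =>
        tendsto_pi_nhds.1 (tendsto_thread z) j).continuous
      (Frequently.of_forall fun m =>
        (continuous_apply j).comp ((continuous_apply m).comp continuous_subtype_val))

end InvSeqSetup

/-- Lemma 3.1 (a), (b): under hypotheses (i)–(vi), every thread
`z = (a_1, a_2, …) ∈ Z` is a Cauchy sequence in `(Q, ρ)` whose limit lies in `X`, and the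
resulting limit function `π : Z → X` is continuous. -/
theorem statement2 (S : InvSeqSetup) :
    (∀ z : S.Thread,
      (∀ e : ℝ, 0 < e → ∃ N : ℕ, ∀ m ≥ N, ∀ l ≥ N, rho (z.1 m) (z.1 l) < e) ∧
      ∃ L ∈ S.X, Filter.Tendsto (fun i => rho (z.1 i) L) Filter.atTop (nhds 0)) ∧
    ∃ π : S.Thread → ESp,
      S.IsLimitMap π ∧ (∀ z : S.Thread, π z ∈ S.X) ∧ Continuous π :=
  ⟨fun z => ⟨fun _ he => InvSeqSetup.exists_rho_thread_lt z he, InvSeqSetup.threadLimit z,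
      InvSeqSetup.threadLimit_mem_X z, InvSeqSetup.tendsto_rho_threadLimit z⟩,
    InvSeqSetup.threadLimit, InvSeqSetup.tendsto_rho_threadLimit, InvSeqSetup.threadLimit_mem_X,
    S.continuous_threadLimit⟩
end

section
/- Under the hypotheses (i)–(vi) of the inverse-sequence setup (data n_i, P_i ⊂ I^{n_i}, δ_i, ε_i, g_i^{i+1} : P_{i+1} → P_i, with X = ∩_{i=1}^∞ P_i × Q_{n_i}), fix x ∈ X and for each i ∈ ℕ let B_{x,i} = N̄(p_{n_i}(x), 2δ_i) ∩ P_i and B^#_{x,i} = N̄(p_{n_i}(x), ε_i) ∩ P_i. Then B_{x,i} ⊂ B^#_{x,i} and g_i^{i+1}(B^#_{x,i+1}) ⊂ B_{x,i}. -/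
open Set Topology Filter

lemma proj_proj_of_le {m n : ℕ} (h : m ≤ n) (x : ESp) : proj m (proj n x) = proj m x := by
  funext j
  unfold proj
  split_ifs <;> first | rfl | omega

lemma summable_rho {x y : ESp} (hx : x ∈ HCube) (hy : y ∈ HCube) :
    Summable fun i : ℕ => |x i - y i| / 2 ^ (i + 1) := by
  refine summable_geometric_two.of_nonneg_of_le (fun i => by positivity) fun i => ?_
  have hxy : |x i - y i| ≤ 1 := Real.dist_eq (x i) (y i) ▸ Real.dist_le_of_mem_Icc_01 (hx i) (hy i)
  calc |x i - y i| / 2 ^ (i + 1) ≤ 1 / 2 ^ i := by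
        gcongr
        · norm_num
        · omega
    _ = (1 / 2) ^ i := by rw [one_div_pow]

lemma two_div_two_pow_pred_le (n : ℕ) : (2 : ℝ) / 2 ^ (n - 1) ≤ 4 / 2 ^ n := by
  rcases n with _ | n
  · norm_num
  · rw [Nat.add_sub_cancel, pow_succ, div_le_div_iff₀ (by positivity) (by positivity)]
    nlinarith [pow_pos (two_pos : (0 : ℝ) < 2) n]

namespace InvSeqSetup

variable (S : InvSeqSetup)

lemma X_subset_HCube : S.X ⊆ HCube := fun _ hx => (Set.mem_iInter.mp hx 0).1

lemma two_mul_δ_le_ε (i : ℕ) : 2 * S.δ i ≤ S.ε i :=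
  calc 2 * S.δ i ≤ 2 / 2 ^ (S.n i - 1) := by rw [← mul_one_div]; linarith [S.hyp5 i]
    _ ≤ 4 / 2 ^ S.n i := two_div_two_pow_pred_le _
    _ ≤ 9 / 2 ^ S.n i := by gcongr; norm_num
    _ ≤ S.ε i := (S.hyp3 i).le

lemma B_subset_Bs (x : ESp) (i : ℕ) : S.B x i ⊆ S.Bs x i :=
  fun _ ⟨⟨hyS, hyρ⟩, hyP⟩ => ⟨⟨hyS, hyρ.trans (S.two_mul_δ_le_ε i)⟩, hyP⟩

lemma mapsTo_g_Bs_B {x : ESp} (hx : x ∈ HCube) (i : ℕ) :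
    Set.MapsTo (S.g i) (S.Bs x (i + 1)) (S.B x i) := by
  rintro y ⟨⟨hyS, hyρ⟩, hyP⟩
  have hgP : S.g i y ∈ S.P i := S.g_maps i hyP
  have hgS : S.g i y ∈ cubeSlice (S.n i) := S.P_sub i hgP
  refine ⟨⟨hgS, ?_⟩, hgP⟩
  have hprojx : rho (proj (S.n i) y) (proj (S.n i) x) < S.δ i := by
    simpa only [proj_proj_of_le (S.hyp2 i).le] using
      S.hyp1 i y hyS.1 (proj (S.n (i + 1)) x) (proj_mem_HCube hx _) hyρ
  calc rho (S.g i y) (proj (S.n i) x)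
      ≤ rho (S.g i y) (proj (S.n i) y) + rho (proj (S.n i) y) (proj (S.n i) x) :=
        rho_triangle hgS.1 (proj_mem_HCube hyS.1 _) (proj_mem_HCube hx _)
    _ ≤ 2 * S.δ i := by linarith [S.hyp4 i y hyP]

end InvSeqSetup

/-- Lemma 3.1 (c): for `x ∈ X`, the balls
`B_{x,i} = N̄(p_{n_i}(x), 2δ_i) ∩ P_i` and `B^#_{x,i} = N̄(p_{n_i}(x), ε_i) ∩ P_i` satisfy
`B_{x,i} ⊆ B^#_{x,i}` and `g_i^{i+1}(B^#_{x,i+1}) ⊆ B_{x,i}`. -/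
theorem statement3 (S : InvSeqSetup) (x : ESp) (hx : x ∈ S.X) (i : ℕ) :
    S.B x i ⊆ S.Bs x i ∧ Set.MapsTo (S.g i) (S.Bs x (i + 1)) (S.B x i) :=
  ⟨S.B_subset_Bs x i, S.mapsTo_g_Bs_B (S.X_subset_HCube hx) i⟩
end
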